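/- For every integer n ≥ 1 and k ≥ 1, Σ_{j=1}^{k} 4^j · C(2k+1, 2j) · S_{2j} = (n + 1/2) · Σ_{j=1}^{k} 4^j · C(2k, 2j−1) · S_{2j−1}, where S_m = Σ_{r=1}^{n} r^m. -/

import Mathlib

/-!
Substituting `x = 2r`, the `j`-th summands on the left are the even-degree terms of
`(2r + 1)^(2k+1)` (the term `j = 0`, equal to `1`, is missing), so the inner sum over `j` is
`((2r + 1)^(2k+1) - (2r - 1)^(2k+1)) / 2 - 1`; likewise the inner sum on the right is twice the
odd part of `(2r + 1)^(2k)`, i.e. `(2r + 1)^(2k) - (2r - 1)^(2k)`. After exchanging the sums,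
both sides telescope in `r`, to `((2n + 1)^(2k+1) - 1) / 2 - n` and
`(n + 1/2) * ((2n + 1)^(2k) - 1)`, which agree.
-/

open Finset

theorem Finset.sum_range_two_mul {M : Type*} [AddCommMonoid M] (f : ℕ → M) (N : ℕ) :
    ∑ i ∈ range (2 * N), f i = ∑ j ∈ range N, (f (2 * j) + f (2 * j + 1)) := by
  induction N with
  | zero => simp
  | succ N ih => rw [mul_add_one, sum_range_succ, sum_range_succ, sum_range_succ, ih, add_assoc]

section CommRing

variable {R : Type*} [CommRing R]

theorem add_one_pow_eq_sum_even_add_sum_odd (x : R) {m N : ℕ} (hm : m < 2 * N) :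
    (x + 1) ^ m = ∑ j ∈ range N, (m.choose (2 * j) : R) * x ^ (2 * j) +
      ∑ j ∈ range N, (m.choose (2 * j + 1) : R) * x ^ (2 * j + 1) := by
  rw [add_pow, ← sum_add_distrib, ← sum_range_two_mul fun i ↦ (m.choose i : R) * x ^ i]
  refine (sum_congr rfl fun i _ ↦ ?_).trans
    (sum_subset (range_subset_range.mpr hm) fun i _ hi ↦ ?_)
  · rw [one_pow, mul_one, mul_comm]
  · rw [Nat.choose_eq_zero_of_lt (by simpa using hi), Nat.cast_zero, zero_mul]

theorem one_sub_pow_eq_sum_even_sub_sum_odd (x : R) {m N : ℕ} (hm : m < 2 * N) :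
    (1 - x) ^ m = ∑ j ∈ range N, (m.choose (2 * j) : R) * x ^ (2 * j) -
      ∑ j ∈ range N, (m.choose (2 * j + 1) : R) * x ^ (2 * j + 1) := by
  rw [sub_eq_neg_add, add_one_pow_eq_sum_even_add_sum_odd _ hm, sub_eq_add_neg, ← sum_neg_distrib]
  congr 1 <;> refine sum_congr rfl fun j _ ↦ ?_
  · rw [(even_two_mul j).neg_pow]
  · rw [(odd_two_mul_add_one j).neg_pow, mul_neg]

theorem two_pow_two_mul (j : ℕ) : (2 : R) ^ (2 * j) = 4 ^ j := by
  rw [pow_mul]; norm_num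

theorem sum_Icc_two_mul_add_one_pow_sub (m n : ℕ) :
    ∑ r ∈ Icc 1 n, ((2 * r + 1 : R) ^ m - (2 * r - 1) ^ m) = (2 * n + 1) ^ m - 1 := by
  induction n with
  | zero => simp
  | succ n ih =>
    rw [sum_Icc_succ_top (Nat.le_add_left 1 n), ih]
    push_cast
    ring

theorem two_mul_sum_Icc_four_pow_mul_choose_even (k : ℕ) (x : R) :
    2 * ∑ j ∈ Icc 1 k, 4 ^ j * ((2 * k + 1).choose (2 * j) : R) * x ^ (2 * j) =
      (2 * x + 1) ^ (2 * k + 1) - (2 * x - 1) ^ (2 * k + 1) - 2 := by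
  have hm : 2 * k + 1 < 2 * (k + 1) := by omega
  have hplus := add_one_pow_eq_sum_even_add_sum_odd (2 * x) hm
  have hminus := one_sub_pow_eq_sum_even_sub_sum_odd (2 * x) hm
  have hsign : (1 - 2 * x) ^ (2 * k + 1) = -(2 * x - 1) ^ (2 * k + 1) := by
    rw [← (odd_two_mul_add_one k).neg_pow, neg_sub]
  have hterm : ∀ j, 4 ^ j * ((2 * k + 1).choose (2 * j) : R) * x ^ (2 * j) =
      ((2 * k + 1).choose (2 * j) : R) * (2 * x) ^ (2 * j) := fun j ↦ by
    rw [mul_pow, two_pow_two_mul]; ring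
  rw [sum_range_eq_add_Ico _ (Nat.add_one_pos k), Ico_add_one_right_eq_Icc] at hplus hminus
  simp only [hterm, mul_zero, pow_zero, Nat.choose_zero_right, Nat.cast_one, mul_one] at hplus hminus ⊢
  linear_combination hsign - hplus - hminus

theorem sum_Icc_four_pow_mul_choose_odd (k : ℕ) (x : R) :
    ∑ j ∈ Icc 1 k, 4 ^ j * ((2 * k).choose (2 * j - 1) : R) * x ^ (2 * j - 1) =
      (2 * x + 1) ^ (2 * k) - (2 * x - 1) ^ (2 * k) := by
  have hm : 2 * k < 2 * (k + 1) := by omega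
  have hplus := add_one_pow_eq_sum_even_add_sum_odd (2 * x) hm
  have hminus := one_sub_pow_eq_sum_even_sub_sum_odd (2 * x) hm
  rw [sum_range_succ (fun j ↦ ((2 * k).choose (2 * j + 1) : R) * (2 * x) ^ (2 * j + 1)) k,
    Nat.choose_eq_zero_of_lt (by omega : 2 * k < 2 * k + 1)] at hplus hminus
  have hsign : (1 - 2 * x) ^ (2 * k) = (2 * x - 1) ^ (2 * k) := by
    rw [← (even_two_mul k).neg_pow, neg_sub]
  have hshift : ∑ j ∈ Icc 1 k, 4 ^ j * ((2 * k).choose (2 * j - 1) : R) * x ^ (2 * j - 1) =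
      2 * ∑ j ∈ range k, ((2 * k).choose (2 * j + 1) : R) * (2 * x) ^ (2 * j + 1) := by
    rw [← Ico_add_one_right_eq_Icc, sum_Ico_eq_sum_range, add_tsub_cancel_right, mul_sum]
    refine sum_congr rfl fun j _ ↦ ?_
    rw [show 2 * (1 + j) - 1 = 2 * j + 1 by omega, mul_pow,
      pow_succ (2 : R), two_pow_two_mul]
    ring
  rw [hshift]
  linear_combination hminus - hplus - hsign

end CommRing

theorem stmt_2_general (n k : ℕ) :
    ∑ j ∈ Finset.Icc 1 k, (4 : ℚ) ^ j * (Nat.choose (2 * k + 1) (2 * j)) *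
      (∑ r ∈ Finset.Icc 1 n, (r : ℚ) ^ (2 * j)) =
    ((n : ℚ) + 1 / 2) *
      ∑ j ∈ Finset.Icc 1 k, (4 : ℚ) ^ j * (Nat.choose (2 * k) (2 * j - 1)) *
        (∑ r ∈ Finset.Icc 1 n, (r : ℚ) ^ (2 * j - 1)) := by
  have swap (c : ℕ → ℚ) (e : ℕ → ℕ) : ∑ j ∈ Icc 1 k, c j * ∑ r ∈ Icc 1 n, (r : ℚ) ^ e j =
      ∑ r ∈ Icc 1 n, ∑ j ∈ Icc 1 k, c j * (r : ℚ) ^ e j := by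
    simp only [mul_sum]
    exact sum_comm
  have hEven : 2 * ∑ r ∈ Icc 1 n, ∑ j ∈ Icc 1 k,
      4 ^ j * ((2 * k + 1).choose (2 * j) : ℚ) * (r : ℚ) ^ (2 * j) =
        (2 * n + 1) ^ (2 * k + 1) - 1 - 2 * n := by
    rw [mul_sum, sum_congr rfl fun (r : ℕ) _ ↦ two_mul_sum_Icc_four_pow_mul_choose_even k (r : ℚ),
      sum_sub_distrib, sum_Icc_two_mul_add_one_pow_sub, sum_const, Nat.card_Icc, nsmul_eq_mul]
    push_cast
    ring
  rw [swap, swap]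
  simp only [sum_Icc_four_pow_mul_choose_odd, sum_Icc_two_mul_add_one_pow_sub]
  linear_combination hEven / 2

theorem stmt_2 (n k : ℕ) (hn : 1 ≤ n) (hk : 1 ≤ k) :
    ∑ j ∈ Finset.Icc 1 k, (4 : ℚ) ^ j * (Nat.choose (2 * k + 1) (2 * j)) *
      (∑ r ∈ Finset.Icc 1 n, (r : ℚ) ^ (2 * j)) =
    ((n : ℚ) + 1 / 2) *
      ∑ j ∈ Finset.Icc 1 k, (4 : ℚ) ^ j * (Nat.choose (2 * k) (2 * j - 1)) *
        (∑ r ∈ Finset.Icc 1 n, (r : ℚ) ^ (2 * j - 1)) :=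
  stmt_2_general n k
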